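/- Consider the state-based algorithm with parameters (ω, φ) and decidable predicate R, started at s₀ = λn.none. Suppose the algorithm terminates in state sⱼ. Then sⱼ encodes an approximate explicit maximal object with respect to R and (ω, φ): for all n ≤ ω(sⱼ), if xₙ ∈ M[sⱼ] then R(M[sⱼ]↾n ∪ {xₙ}, φ(sⱼ)), and if xₙ ∉ M[sⱼ] then ¬R(M[sⱼ]↾n ∪ {xₙ}, f[sⱼ](n)). -/

import Mathlib

-- A state is a function `ℕ → Option ℕ`; `s n = none` means `xₙ ∈ M[s]`, and
-- `s n = some p` means `xₙ ∉ M[s]` with recorded evidence `f[s](n) = p`.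

/-- The finite set `M[s]↾n = M[s] ∩ {x_m | m < n}`. -/
def StateSeg {X : Type*} [DecidableEq X] (x : ℕ → X) (s : ℕ → Option ℕ) (n : ℕ) : Finset X :=
  ((Finset.range n).filter fun m => s m = none).image x

instance decExistsLE (N : ℕ) (p : ℕ → Prop) [DecidablePred p] :
    Decidable (∃ m, m ≤ N ∧ p m) :=
  decidable_of_iff (∃ m, m < N + 1 ∧ p m) (by simp [Nat.lt_succ_iff])

/-- One step of the algorithm with parameters `(ω, φ)` and predicate `R`:
search for the least `n ≤ ω s` with `xₙ ∈ M[s]` and `¬R(M[s]↾n ∪ {xₙ}, φ s)`;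
if none exists the state is final (the step returns `s` itself), otherwise
keep `s` below `n`, record `φ s` at `n`, and put everything above `n` back into `M`. -/
def StateStep {X : Type*} [DecidableEq X] (x : ℕ → X) (R : Finset X → ℕ → Prop)
    [∀ A p, Decidable (R A p)] (ω φ : (ℕ → Option ℕ) → ℕ)
    (s : ℕ → Option ℕ) : ℕ → Option ℕ :=
  if h : ∃ m, m ≤ ω s ∧ s m = none ∧ ¬ R (StateSeg x s m ∪ {x m}) (φ s) then
    fun k => if k < Nat.find h then s k else if k = Nat.find h then some (φ s) else none
  else s

/-- The run of the algorithm started at the initial state `s₀ = λn.none`. -/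
def StateRun {X : Type*} [DecidableEq X] (x : ℕ → X) (R : Finset X → ℕ → Prop)
    [∀ A p, Decidable (R A p)] (ω φ : (ℕ → Option ℕ) → ℕ) : ℕ → ℕ → Option ℕ
  | 0 => fun _ => none
  | i + 1 => StateStep x R ω φ (StateRun x R ω φ i)

/-- A state is final (the algorithm terminates in it) if the search fails. -/
def StateFinal {X : Type*} [DecidableEq X] (x : ℕ → X) (R : Finset X → ℕ → Prop)
    (ω φ : (ℕ → Option ℕ) → ℕ) (s : ℕ → Option ℕ) : Prop :=
  ¬ ∃ m, m ≤ ω s ∧ s m = none ∧ ¬ R (StateSeg x s m ∪ {x m}) (φ s)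

/-! A step that writes at position `N` keeps the state below `N`, records a value at `N` that
witnesses `¬R` against the unchanged segment `M[s]↾N`, and resets every position above `N`. So a
recorded value survives a step only if the segment below it is untouched, and the witnesses stay
valid along the whole run. The other half is exactly the failure of the search in a final state. -/

section Soundness

variable {X : Type*} [DecidableEq X] (x : ℕ → X) (R : Finset X → ℕ → Prop)

lemma stateSeg_congr {s t : ℕ → Option ℕ} {n : ℕ} (h : ∀ m < n, s m = t m) :
    StateSeg x s n = StateSeg x t n := by
  unfold StateSeg
  congr 1
  exact Finset.filter_congr fun m hm => by rw [h m (Finset.mem_range.mp hm)]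

def StateSound (s : ℕ → Option ℕ) : Prop :=
  ∀ n p, s n = some p → ¬ R (StateSeg x s n ∪ {x n}) p

variable {x R} [∀ A p, Decidable (R A p)] (ω φ : (ℕ → Option ℕ) → ℕ)

lemma StateSound.stateStep {s : ℕ → Option ℕ} (hs : StateSound x R s) :
    StateSound x R (StateStep x R ω φ s) := by
  unfold StateStep
  split_ifs with hfound
  · intro n p hn
    rcases lt_trichotomy n (Nat.find hfound) with hlt | heq | hgt
    · simp only [if_pos hlt] at hn
      rw [← stateSeg_congr x fun m hm => (if_pos (hm.trans hlt)).symm]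
      exact hs n p hn
    · subst heq
      simp only [lt_irrefl, if_false, if_true, Option.some.injEq] at hn
      subst hn
      rw [← stateSeg_congr x fun m hm => (if_pos hm).symm]
      exact (Nat.find_spec hfound).2.2
    · simp only [if_neg hgt.not_gt, if_neg hgt.ne', reduceCtorEq] at hn
  · exact hs

lemma stateSound_stateRun (i : ℕ) : StateSound x R (StateRun x R ω φ i) := by
  induction i with
  | zero => intro n p hn; cases hn
  | succ i ih => exact ih.stateStep ω φ

end Soundness

/-- If the algorithm terminates in state `sⱼ`, then `sⱼ` encodes an approximate explicit
maximal object w.r.t. `R` and `(ω, φ)`: for all `n ≤ ω sⱼ`, if `xₙ ∈ M[sⱼ]` then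
`R(M[sⱼ]↾n ∪ {xₙ}, φ sⱼ)`, and if `xₙ ∉ M[sⱼ]` then `¬R(M[sⱼ]↾n ∪ {xₙ}, f[sⱼ](n))`. -/
theorem stmt10 {X : Type*} [DecidableEq X] (x : ℕ → X) (R : Finset X → ℕ → Prop)
    [∀ A p, Decidable (R A p)] (ω φ : (ℕ → Option ℕ) → ℕ)
    (j : ℕ) (hterm : StateFinal x R ω φ (StateRun x R ω φ j)) :
    ∀ n ≤ ω (StateRun x R ω φ j),
      (StateRun x R ω φ j n = none →
        R (StateSeg x (StateRun x R ω φ j) n ∪ {x n}) (φ (StateRun x R ω φ j))) ∧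
      ∀ p : ℕ, StateRun x R ω φ j n = some p →
        ¬ R (StateSeg x (StateRun x R ω φ j) n ∪ {x n}) p := by
  intro n hn
  refine ⟨fun hmem => ?_, stateSound_stateRun ω φ j n⟩
  by_contra hreject
  exact hterm ⟨n, hn, hmem, hreject⟩
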